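/- arXiv:2207.09581 — 2 statements merged into one kernel-verified Lean document; each statement's English description precedes it below -/
import Mathlib

section
/- Let Φ = φ + A where φ is supported on the first superdiagonal and A on the (m−1)-st subdiagonal of an n×n matrix (2 ≤ m ≤ n). Let ζ_m = exp(2πi/m) and g = diag(ζ_m^{(1-n)/2}, …, ζ_m^{(n-1)/2}) (for a fixed square root). Then g^{-1} Φ g = ζ_m Φ, i.e. Φ defines an m-cyclic (μ_m-fixed) matrix up to conjugation. -/
open Matrix

/-- Let `Φ = φ + A` with `φ` supported on the first superdiagonal and `A` on the
`(m−1)`-st subdiagonal of an `n × n` complex matrix (`2 ≤ m ≤ n`). With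
`ζ_m = exp(2πi/m)` and `g = diag(ζ_m^{(1-n)/2}, …, ζ_m^{(n-1)/2})` (for a fixed
square root `s` of `ζ_m`), one has `g⁻¹ Φ g = ζ_m • Φ`. -/
theorem stmt_7 (n m : ℕ) (hm : 2 ≤ m) (hmn : m ≤ n)
    (φ A : Matrix (Fin n) (Fin n) ℂ)
    (hφ : ∀ i j : Fin n, (j : ℤ) ≠ (i : ℤ) + 1 → φ i j = 0)
    (hA : ∀ i j : Fin n, (i : ℤ) ≠ (j : ℤ) + m - 1 → A i j = 0)
    (s : ℂ) (hs : s ^ 2 = Complex.exp (2 * Real.pi * Complex.I / m)) :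
    (Matrix.diagonal fun i : Fin n => s ^ (2 * (i : ℤ) + 1 - n))⁻¹ * (φ + A) *
        (Matrix.diagonal fun i : Fin n => s ^ (2 * (i : ℤ) + 1 - n)) =
      Complex.exp (2 * Real.pi * Complex.I / m) • (φ + A) := by
  set ζ : ℂ := Complex.exp (2 * Real.pi * Complex.I / m) with hζ
  have hm0 : (m : ℂ) ≠ 0 := Nat.cast_ne_zero.mpr (by omega)
  have hζm : ζ ^ m = 1 := by
    rw [hζ, ← Complex.exp_nat_mul]
    rw [mul_div_cancel₀ _ hm0]
    exact Complex.exp_two_pi_mul_I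
  have hζ0 : ζ ≠ 0 := Complex.exp_ne_zero _
  have hs0 : s ≠ 0 := by
    intro h
    apply hζ0
    rw [← hs, h]; ring
  -- the left inverse of the diagonal matrix
  have hinv : (Matrix.diagonal fun i : Fin n => s ^ (2 * (i : ℤ) + 1 - n))⁻¹ =
      Matrix.diagonal fun i : Fin n => s ^ (-(2 * (i : ℤ) + 1 - n)) := by
    refine Matrix.inv_eq_left_inv ?_
    rw [Matrix.diagonal_mul_diagonal]
    have : (fun i : Fin n => s ^ (-(2 * (i : ℤ) + 1 - n)) * s ^ (2 * (i : ℤ) + 1 - n))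
        = fun _ => (1 : ℂ) := by
      funext i
      rw [_root_.zpow_neg, inv_mul_cancel₀ (zpow_ne_zero _ hs0)]
    rw [this, Matrix.diagonal_one]
  rw [hinv]
  ext i j
  simp only [Matrix.mul_apply, Matrix.diagonal_apply, Matrix.smul_apply, Matrix.add_apply,
    smul_eq_mul]
  rw [Finset.sum_eq_single j (by intro b _ hb; simp [hb]) (by simp)]
  rw [Finset.sum_eq_single i (by intro b _ hb; simp [Ne.symm hb]) (by simp)]
  simp only [if_pos rfl]
  have key : ∀ x : ℂ, (∀ i' j' : Fin n, (j' : ℤ) ≠ (i' : ℤ) + 1 → φ i' j' = 0) →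
      True := fun _ _ => trivial
  by_cases h1 : (j : ℤ) = (i : ℤ) + 1
  · have hA0 : A i j = 0 := by
      apply hA
      intro h
      omega
    rw [hA0, add_zero]
    have e2 : s ^ (2 : ℤ) = ζ := by
      rw [← hs, show (2:ℤ) = ((2:ℕ):ℤ) by norm_num, zpow_natCast]
    have hpow : s ^ (-(2 * (i : ℤ) + 1 - n)) * s ^ (2 * (j : ℤ) + 1 - n) = ζ := by
      rw [mul_comm, ← zpow_add₀ hs0,
        show (2 * (j : ℤ) + 1 - n) + (-(2 * (i : ℤ) + 1 - n)) = 2 by omega, e2]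
    calc s ^ (-(2 * (i : ℤ) + 1 - n)) * φ i j * s ^ (2 * (j : ℤ) + 1 - n)
        = (s ^ (-(2 * (i : ℤ) + 1 - n)) * s ^ (2 * (j : ℤ) + 1 - n)) * φ i j := by ring
      _ = ζ * φ i j := by rw [hpow]
  · have hφ0 : φ i j = 0 := hφ i j h1
    by_cases h2 : (i : ℤ) = (j : ℤ) + m - 1
    · rw [hφ0, zero_add]
      have e2 : s ^ (2 : ℤ) = ζ := by
        rw [← hs, show (2:ℤ) = ((2:ℕ):ℤ) by norm_num, zpow_natCast]
      have hpow : s ^ (-(2 * (i : ℤ) + 1 - n)) * s ^ (2 * (j : ℤ) + 1 - n)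
          = ζ ^ (1 - (m : ℤ)) := by
        rw [mul_comm, ← zpow_add₀ hs0,
          show (2 * (j : ℤ) + 1 - n) + (-(2 * (i : ℤ) + 1 - n)) = 2 * (1 - (m:ℤ)) by omega,
          _root_.zpow_mul, e2]
      have hz : ζ ^ (1 - (m : ℤ)) = ζ := by
        rw [sub_eq_add_neg, zpow_add₀ hζ0, zpow_one, _root_.zpow_neg, zpow_natCast ζ m,
          hζm]
        simp
      calc s ^ (-(2 * (i : ℤ) + 1 - n)) * A i j * s ^ (2 * (j : ℤ) + 1 - n)
          = (s ^ (-(2 * (i : ℤ) + 1 - n)) * s ^ (2 * (j : ℤ) + 1 - n)) * A i j := by ring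
        _ = ζ * A i j := by rw [hpow, hz]
    · rw [hφ0, hA i j h2]
      ring
end

section
/- Let φ be a matrix supported on the first superdiagonal and A a matrix supported on the (m−1)-st subdiagonal of an n×n matrix, m ≥ 2. Then tr((φ − A)^m) = −tr((φ + A)^m). In particular, if tr((φ+A)^m) ≠ 0 then φ + A and (−1)^{m−1}(φᵀ − Aᵀ) are not conjugate. -/
open Matrix

/-- With `φ` supported on the first superdiagonal and `A` on the `(m−1)`-st
subdiagonal of an `n × n` complex matrix, `m ≥ 2`, one has
`tr((φ − A)^m) = −tr((φ + A)^m)`; consequently, if `tr((φ + A)^m) ≠ 0` then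
`φ + A` is not conjugate to `(−1)^{m−1}(φᵀ − Aᵀ)`. -/
theorem stmt_9 (n m : ℕ) (hm : 2 ≤ m)
    (φ A : Matrix (Fin n) (Fin n) ℂ)
    (hφ : ∀ i j : Fin n, (j : ℤ) ≠ (i : ℤ) + 1 → φ i j = 0)
    (hA : ∀ i j : Fin n, (i : ℤ) ≠ (j : ℤ) + m - 1 → A i j = 0) :
    Matrix.trace ((φ - A) ^ m) = - Matrix.trace ((φ + A) ^ m) ∧
      (Matrix.trace ((φ + A) ^ m) ≠ 0 →
        ¬ ∃ g : GL (Fin n) ℂ,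
          (↑g⁻¹ : Matrix (Fin n) (Fin n) ℂ) * (φ + A) * (↑g : Matrix (Fin n) (Fin n) ℂ) =
            ((-1 : ℂ) ^ (m - 1)) • (φ.transpose - A.transpose)) := by
  have hm0 : (m : ℂ) ≠ 0 := Nat.cast_ne_zero.mpr (by omega)
  -- ω is an m-th root of -1
  set ω : ℂ := Complex.exp (Real.pi * Complex.I / m) with hωdef
  have hω0 : ω ≠ 0 := Complex.exp_ne_zero _
  have hωm : ω ^ m = -1 := by
    rw [hωdef, ← Complex.exp_nat_mul]
    have : (m : ℂ) * (Real.pi * Complex.I / m) = Real.pi * Complex.I := by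
      field_simp
    rw [this, Complex.exp_pi_mul_I]
  set d : Fin n → ℂ := fun i => ω ^ (i : ℕ) with hd
  set D : Matrix (Fin n) (Fin n) ℂ := Matrix.diagonal d with hD
  have hDdet : IsUnit D.det := by
    rw [hD, Matrix.det_diagonal]
    exact isUnit_iff_ne_zero.mpr
      (Finset.prod_ne_zero_iff.mpr fun i _ => pow_ne_zero _ hω0)
  have key : (φ + A) * D = ω • (D * (φ - A)) := by
    ext i j
    rw [hD]
    simp only [Matrix.mul_diagonal, Matrix.diagonal_mul, Matrix.add_apply,
      Matrix.sub_apply, Matrix.smul_apply, smul_eq_mul, hd]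
    by_cases h1 : (j : ℤ) = (i : ℤ) + 1
    · have hA0 : A i j = 0 := hA i j (by omega)
      have hji : (j : ℕ) = (i : ℕ) + 1 := by omega
      rw [hA0, hji, pow_succ]
      ring
    · by_cases h2 : (i : ℤ) = (j : ℤ) + m - 1
      · have hφ0 : φ i j = 0 := hφ i j (by omega)
        have hij : (i : ℕ) + 1 = (j : ℕ) + m := by omega
        have h3 : ω * ω ^ (i : ℕ) = -ω ^ (j : ℕ) := by
          have : ω * ω ^ (i : ℕ) = ω ^ ((i : ℕ) + 1) := by rw [pow_succ]; ring
          rw [this, hij, pow_add, hωm]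
          ring
        rw [hφ0]
        linear_combination (A i j) * h3
      · rw [hφ i j h1, hA i j h2]
        ring
  have pow_key : ∀ k : ℕ, (φ + A) ^ k * D = ω ^ k • (D * (φ - A) ^ k) := by
    intro k
    induction k with
    | zero => simp
    | succ k ih =>
      rw [pow_succ, mul_assoc, key, mul_smul_comm, ← mul_assoc, ih,
        smul_mul_assoc, smul_smul, mul_assoc, ← pow_succ, ← pow_succ']
  have htr : Matrix.trace ((φ + A) ^ m) = - Matrix.trace ((φ - A) ^ m) := by
    have h1 : (φ + A) ^ m = ω ^ m • (D * (φ - A) ^ m) * D⁻¹ := by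
      rw [← pow_key m, mul_assoc, Matrix.mul_nonsing_inv D hDdet, mul_one]
    rw [h1, hωm, Matrix.smul_mul, Matrix.trace_smul, Matrix.trace_mul_comm,
      ← mul_assoc, Matrix.nonsing_inv_mul D hDdet, one_mul]
    simp
  have main : Matrix.trace ((φ - A) ^ m) = - Matrix.trace ((φ + A) ^ m) := by
    rw [htr]; ring
  refine ⟨main, fun htr0 ⟨g, hg⟩ => ?_⟩
  have hconj : ((↑g⁻¹ : Matrix (Fin n) (Fin n) ℂ) * (φ + A) * (↑g : Matrix (Fin n) (Fin n) ℂ)) ^ m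
      = (↑g⁻¹ : Matrix (Fin n) (Fin n) ℂ) * (φ + A) ^ m * (↑g : Matrix (Fin n) (Fin n) ℂ) :=
    Units.conj_pow' g (φ + A) m
  have heq : Matrix.trace ((φ + A) ^ m)
      = Matrix.trace ((((-1 : ℂ) ^ (m - 1)) • (φ.transpose - A.transpose)) ^ m) := by
    rw [← hg, hconj, Matrix.trace_mul_comm, ← mul_assoc]
    have : (↑g : Matrix (Fin n) (Fin n) ℂ) * (↑g⁻¹ : Matrix (Fin n) (Fin n) ℂ) = 1 := by
      exact_mod_cast g.mul_inv
    rw [this, one_mul]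
  have hrhs : Matrix.trace ((((-1 : ℂ) ^ (m - 1)) • (φ.transpose - A.transpose)) ^ m)
      = Matrix.trace ((φ - A) ^ m) := by
    have heven : Even ((m - 1) * m) := by
      rcases Nat.even_or_odd m with h | h
      · exact h.mul_left _
      · exact (Nat.Odd.sub_odd h odd_one).mul_right _
    rw [smul_pow, ← pow_mul, heven.neg_one_pow, one_smul]
    have : φ.transpose - A.transpose = (φ - A).transpose := by
      rw [Matrix.transpose_sub]
    rw [this, ← Matrix.transpose_pow, Matrix.trace_transpose]
  have hfin : Matrix.trace ((φ + A) ^ m) = - Matrix.trace ((φ + A) ^ m) :=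
    heq.trans (hrhs.trans main)
  exact htr0 (by linear_combination hfin / 2)
end
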